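/- Fix x₀ ∈ (0, 1). Then, as ε → 0⁺, the value u_ε(x₀) = x₀ − V*_{1/2}(x₀/ε²)/V*_{1/2}(1/ε²) of the exact solution of the singularly perturbed Caputo fractional convection–diffusion problem −ε D^{3/2}_* u − u' = −1, u(0) = u(1) = 0, converges to x₀ − √x₀. In particular the limit differs from the reduced solution U(x₀) = x₀ − 1 at every interior point, in contrast to the classical case α = 0. -/

import Mathlib

open Real Set MeasureTheory Filter intervalIntegral

/-- `V*_{1/2}(ξ) = Σ_{k=1}^∞ ξ^k/k! − Σ_{k=1}^∞ ξ^{k+1/2}/Γ(k+3/2)`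
(sums written over `k : ℕ` with the index shifted by one;
`ξ ^ (k + 1/2)` is the real power `Real.rpow`). -/
noncomputable def Vstar (ξ : ℝ) : ℝ :=
  (∑' k : ℕ, ξ ^ (k + 1) / (Nat.factorial (k + 1) : ℝ)) -
  ∑' k : ℕ, ξ ^ (((k : ℝ) + 1) + 1 / 2) / Real.Gamma (((k : ℝ) + 1) + 3 / 2)




lemma gamma32_pos (k : ℕ) : 0 < Real.Gamma ((k : ℝ) + 3/2) :=
  Real.Gamma_pos_of_pos (by positivity)

lemma gamma32_ge (k : ℕ) : (k.factorial : ℝ) / 2 ≤ Real.Gamma ((k : ℝ) + 3/2) := by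
  induction k with
  | zero =>
      have h : ((0:ℕ):ℝ) + 3/2 = 1/2 + 1 := by norm_num
      rw [h, Real.Gamma_add_one (by norm_num), Real.Gamma_one_half_eq]
      have : (1:ℝ) ≤ Real.sqrt π := by
        rw [show (1:ℝ) = Real.sqrt 1 by simp]
        exact Real.sqrt_le_sqrt (by linarith [Real.pi_gt_three])
      simp only [Nat.factorial_zero, Nat.cast_one]
      nlinarith
  | succ k ih =>
      have h : ((k+1:ℕ):ℝ) + 3/2 = ((k:ℝ) + 3/2) + 1 := by push_cast; ring
      rw [h, Real.Gamma_add_one (by positivity)]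
      have h1 : ((k:ℝ) + 1) * ((k.factorial : ℝ)/2) ≤ ((k:ℝ) + 3/2) * Real.Gamma ((k:ℝ)+3/2) := by
        apply mul_le_mul (by linarith) ih (by positivity) (by positivity)
      calc ((k+1).factorial : ℝ)/2 = ((k:ℝ)+1) * ((k.factorial : ℝ)/2) := by
            rw [Nat.factorial_succ]; push_cast; ring
        _ ≤ _ := h1

lemma abs_bound (x : ℝ) (c : ℝ) (hc : 0 ≤ c) (k : ℕ) :
    c * |x|^(2*k) / Real.Gamma ((k : ℝ) + 3/2) ≤ 2 * c * (x^2)^k / k.factorial := by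
  have hg := gamma32_ge k
  have hgp := gamma32_pos k
  have hfp : (0:ℝ) < (k.factorial : ℝ) := by exact_mod_cast k.factorial_pos
  have hx : |x|^(2*k) = (x^2)^k := by
    rw [pow_mul, sq_abs]
  rw [hx]
  have h0 : (0:ℝ) ≤ c * (x^2)^k := by positivity
  calc c * (x^2)^k / Real.Gamma ((k : ℝ) + 3/2)
      ≤ c * (x^2)^k / ((k.factorial : ℝ)/2) :=
        div_le_div_of_nonneg_left h0 (by positivity) hg
    _ = 2 * c * (x^2)^k / k.factorial := by field_simp

lemma summable_ff (x : ℝ) : Summable (fun k : ℕ => x^(2*k+1) / Real.Gamma ((k : ℝ) + 3/2)) := by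
  have h := (Real.summable_pow_div_factorial (x^2)).mul_left (2 * |x|)
  refine Summable.of_norm (Summable.of_nonneg_of_le (fun k => norm_nonneg _) (fun k => ?_) h)
  have := abs_bound x |x| (abs_nonneg x) k
  rw [norm_div, Real.norm_eq_abs, Real.norm_eq_abs, abs_of_pos (gamma32_pos k), abs_pow]
  calc |x| ^ (2*k+1) / Real.Gamma ((k : ℝ) + 3/2)
      = |x| * |x|^(2*k) / Real.Gamma ((k : ℝ) + 3/2) := by rw [pow_succ']
    _ ≤ 2 * |x| * (x^2)^k / k.factorial := this
    _ = 2 * |x| * ((x^2)^k / k.factorial) := by ring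







noncomputable def ff (x : ℝ) : ℝ := ∑' k : ℕ, x^(2*k+1) / Real.Gamma ((k:ℝ) + 3/2)

lemma two_k_one (k : ℕ) : (2*(k:ℝ)+1) ≤ 3 * 3^k := by
  induction k with
  | zero => norm_num
  | succ k ih =>
      have h : (1:ℝ) ≤ 3^k := by
        simpa using pow_le_pow_left₀ (by norm_num : (0:ℝ) ≤ 1) (by norm_num : (1:ℝ) ≤ 3) k
      push_cast
      push_cast at ih
      rw [pow_succ]
      nlinarith

lemma summable_u (R : ℝ) :
    Summable (fun k : ℕ => 2*(2*(k:ℝ)+1)*(R^2)^k/(k.factorial : ℝ)) := by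
  have h := (Real.summable_pow_div_factorial (3*R^2)).mul_left 6
  refine Summable.of_nonneg_of_le (fun k => by positivity) (fun k => ?_) h
  have h2 : (3*R^2)^k = 3^k * (R^2)^k := mul_pow 3 (R^2) k
  rw [h2, ← mul_div_assoc]
  have hfp : (0:ℝ) < (k.factorial : ℝ) := by exact_mod_cast k.factorial_pos
  apply div_le_div_of_nonneg_right ?_ hfp.le |>.trans_eq rfl
  case _ => nlinarith [two_k_one k, pow_nonneg (sq_nonneg R) k]

lemma dff_bound {y R : ℝ} (h : |y| ≤ R) (k : ℕ) :
    ‖(2*(k:ℝ)+1) * y^(2*k) / Real.Gamma ((k:ℝ)+3/2)‖ ≤ 2*(2*(k:ℝ)+1)*(R^2)^k/(k.factorial : ℝ) := by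
  have hgp := gamma32_pos k
  rw [Real.norm_eq_abs, abs_div, abs_of_pos hgp, abs_mul, abs_pow,
    abs_of_nonneg (by positivity : (0:ℝ) ≤ 2*(k:ℝ)+1)]
  have hR : 0 ≤ R := (abs_nonneg y).trans h
  calc (2*(k:ℝ)+1) * |y|^(2*k) / Real.Gamma ((k:ℝ)+3/2)
      ≤ (2*(k:ℝ)+1) * |R|^(2*k) / Real.Gamma ((k:ℝ)+3/2) := by
        have hpow : |y|^(2*k) ≤ |R|^(2*k) :=
          pow_le_pow_left₀ (abs_nonneg y) (h.trans (le_abs_self R)) _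
        have hmul := mul_le_mul_of_nonneg_left hpow (by positivity : (0:ℝ) ≤ 2*(k:ℝ)+1)
        exact div_le_div_of_nonneg_right hmul hgp.le |>.trans_eq rfl
    _ ≤ 2 * (2*(k:ℝ)+1) * (R^2)^k / k.factorial := abs_bound R _ (by positivity) k

lemma summable_dff (x : ℝ) :
    Summable (fun k : ℕ => (2*(k:ℝ)+1) * x^(2*k) / Real.Gamma ((k:ℝ)+3/2)) :=
  Summable.of_norm (Summable.of_nonneg_of_le (fun k => norm_nonneg _)
    (fun k => dff_bound le_rfl k)
    (summable_u |x|)) 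

lemma hasDerivAt_ff_raw (x : ℝ) :
    HasDerivAt ff (∑' k : ℕ, (2*(k:ℝ)+1) * x^(2*k) / Real.Gamma ((k:ℝ)+3/2)) x := by
  have hR : (0:ℝ) < |x| + 1 := by positivity
  have H := hasDerivAt_tsum_of_isPreconnected (summable_u (|x|+1)) Metric.isOpen_ball
    (convex_ball (0:ℝ) (|x|+1)).isPreconnected
    (g := fun (k : ℕ) z => z^(2*k+1) / Real.Gamma ((k:ℝ)+3/2))
    (g' := fun (k : ℕ) y => (2*(k:ℝ)+1) * y^(2*k) / Real.Gamma ((k:ℝ)+3/2))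
    (y₀ := x) (y := x)
    ?hg ?hg' ?hx (summable_ff x) ?hx2
  · exact H
  case hg =>
    intro n y _
    have h := (hasDerivAt_pow (2*n+1) y).div_const (Real.Gamma ((n:ℝ)+3/2))
    refine h.congr_deriv ?_
    push_cast
    ring_nf
  case hg' =>
    intro n y hy
    apply dff_bound
    rw [Metric.mem_ball, Real.dist_eq, sub_zero] at hy
    linarith
  case hx => exact Metric.mem_ball.mpr (by rw [Real.dist_eq, sub_zero]; exact lt_of_le_of_lt (le_abs_self _) (by rw [abs_abs]; linarith))
  case hx2 => exact Metric.mem_ball.mpr (by rw [Real.dist_eq, sub_zero]; exact lt_of_le_of_lt (le_abs_self _) (by rw [abs_abs]; linarith))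




lemma gamma_32 : Real.Gamma (3/2) = Real.sqrt π / 2 := by
  rw [show (3/2 : ℝ) = 1/2 + 1 by norm_num, Real.Gamma_add_one (by norm_num),
    Real.Gamma_one_half_eq]
  ring

lemma dff_eq (x : ℝ) :
    ∑' k : ℕ, (2*(k:ℝ)+1) * x^(2*k) / Real.Gamma ((k:ℝ)+3/2)
      = 2/Real.sqrt π + 2*x*ff x := by
  rw [Summable.tsum_eq_zero_add (summable_dff x)]
  congr 1
  · norm_num [gamma_32]
  · have h : ∀ k : ℕ, (2*((k+1:ℕ):ℝ)+1) * x^(2*(k+1)) / Real.Gamma (((k+1:ℕ):ℝ)+3/2)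
        = (2*x) * (x^(2*k+1) / Real.Gamma ((k:ℝ)+3/2)) := by
      intro k
      have hcast : ((k+1:ℕ):ℝ)+3/2 = ((k:ℝ)+3/2) + 1 := by push_cast; ring
      rw [hcast, Real.Gamma_add_one (by positivity)]
      have hgp := gamma32_pos k
      have hne : ((k:ℝ)+3/2) ≠ 0 := by positivity
      field_simp
      push_cast
      ring
    rw [tsum_congr h, tsum_mul_left]
    rfl

lemma hasDerivAt_ff (x : ℝ) : HasDerivAt ff (2/Real.sqrt π + 2*x*ff x) x := by
  have := hasDerivAt_ff_raw x
  rwa [dff_eq x] at this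

lemma ff_zero : ff 0 = 0 := by
  unfold ff
  have : ∀ k : ℕ, (0:ℝ)^(2*k+1) / Real.Gamma ((k:ℝ)+3/2) = 0 := by
    intro k
    rw [zero_pow (by omega)]
    simp
  rw [tsum_congr this, tsum_zero]

lemma ff_eq (x : ℝ) :
    Real.exp (-x^2) * ff x = (2/Real.sqrt π) * ∫ t in (0:ℝ)..x, Real.exp (-t^2) := by
  set F : ℝ → ℝ := fun x => Real.exp (-x^2) * ff x
      - (2/Real.sqrt π) * ∫ t in (0:ℝ)..x, Real.exp (-t^2) with hF
  have hcont : Continuous fun t : ℝ => Real.exp (-t^2) := by continuity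
  have hderiv : ∀ y : ℝ, HasDerivAt F 0 y := by
    intro y
    have h1 : HasDerivAt (fun z : ℝ => -z^2) (-(2*y)) y := by
      have := (hasDerivAt_pow 2 y).neg
      refine this.congr_deriv ?_
      push_cast
      ring
    have h2 : HasDerivAt (fun z : ℝ => Real.exp (-z^2)) (Real.exp (-y^2) * (-(2*y))) y := h1.exp
    have h3 := h2.mul (hasDerivAt_ff y)
    have h4 : HasDerivAt (fun z : ℝ => ∫ t in (0:ℝ)..z, Real.exp (-t^2)) (Real.exp (-y^2)) y :=
      intervalIntegral.integral_hasDerivAt_right (hcont.intervalIntegrable _ _)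
        (hcont.stronglyMeasurableAtFilter _ _) hcont.continuousAt
    have h5 := h3.sub ((h4.const_mul (2/Real.sqrt π)))
    refine h5.congr_deriv ?_
    ring_nf
  have hconst : ∀ y : ℝ, F y = F 0 :=
    fun y => is_const_of_deriv_eq_zero (fun z => (hderiv z).differentiableAt)
      (fun z => (hderiv z).deriv) y 0
  have h0 : F 0 = 0 := by
    simp [hF, ff_zero]
  have := hconst x
  rw [h0, hF] at this
  linarith



noncomputable def gaussTail (x : ℝ) : ℝ := ∫ t in Set.Ioi x, Real.exp (-t^2)

lemma integrableGauss (x : ℝ) : IntegrableOn (fun t : ℝ => Real.exp (-t^2)) (Set.Ioi x) := by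
  have h := (integrable_exp_neg_mul_sq (one_pos)).integrableOn (s := Set.Ioi x)
  simpa using h

lemma gaussTail_nonneg (x : ℝ) : 0 ≤ gaussTail x :=
  setIntegral_nonneg measurableSet_Ioi (fun t _ => (Real.exp_pos _).le)

lemma gauss_Ioi_zero : (∫ t in Set.Ioi (0:ℝ), Real.exp (-t^2)) = Real.sqrt π / 2 := by
  have h := integral_gaussian_Ioi 1
  simpa using h

lemma intervalG {x : ℝ} (hx : 0 ≤ x) :
    (∫ t in (0:ℝ)..x, Real.exp (-t^2)) = Real.sqrt π / 2 - gaussTail x := by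
  have hsplit : (∫ t in Set.Ioi (0:ℝ), Real.exp (-t^2))
      = (∫ t in Set.Ioc (0:ℝ) x, Real.exp (-t^2)) + ∫ t in Set.Ioi x, Real.exp (-t^2) := by
    rw [← setIntegral_union (Set.Ioc_disjoint_Ioi le_rfl) measurableSet_Ioi
      ((integrableGauss 0).mono_set Set.Ioc_subset_Ioi_self) (integrableGauss x),
      Set.Ioc_union_Ioi_eq_Ioi hx]
  rw [gauss_Ioi_zero] at hsplit
  rw [intervalIntegral.integral_of_le hx]
  unfold gaussTail
  linarith [hsplit]

lemma gaussTail_le {x : ℝ} (hx : 0 < x) : gaussTail x ≤ Real.exp (-x^2) / x := by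
  have hint2 : IntegrableOn (fun t : ℝ => Real.exp (-x*t)) (Set.Ioi x) :=
    exp_neg_integrableOn_Ioi x hx
  have hmono : gaussTail x ≤ ∫ t in Set.Ioi x, Real.exp (-x*t) := by
    apply setIntegral_mono_on (integrableGauss x) hint2 measurableSet_Ioi
    intro t ht
    rw [Set.mem_Ioi] at ht
    apply Real.exp_le_exp.mpr
    nlinarith
  have hval : (∫ t in Set.Ioi x, Real.exp (-x*t)) = Real.exp (-x^2) / x := by
    have hderiv : ∀ t ∈ Set.Ici x, HasDerivAt (fun t => -(Real.exp (-x*t)/x)) (Real.exp (-x*t)) t := by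
      intro t _
      have h1 : HasDerivAt (fun t : ℝ => -x*t) (-x) t := by
        simpa using (hasDerivAt_id t).const_mul (-x)
      have h2 := ((h1.exp).div_const x).neg
      refine h2.congr_deriv ?_
      field_simp
    have htend : Tendsto (fun t => -(Real.exp (-x*t)/x)) atTop (nhds 0) := by
      have h1 : Tendsto (fun t : ℝ => -x*t) atTop atBot := by
        apply Filter.Tendsto.const_mul_atTop_of_neg (by linarith) tendsto_id
      have h2 := Real.tendsto_exp_atBot.comp h1
      have h3 := (h2.div_const x).neg
      simpa using h3
    have := integral_Ioi_of_hasDerivAt_of_tendsto' hderiv hint2 htend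
    rw [this]
    field_simp
    ring
  linarith [hmono, hval.le, hval.ge]





lemma sqrtpi_pos : (0:ℝ) < Real.sqrt π := Real.sqrt_pos.mpr Real.pi_pos

lemma expSum (ξ : ℝ) :
    (∑' k : ℕ, ξ ^ (k + 1) / (Nat.factorial (k + 1) : ℝ)) = Real.exp ξ - 1 := by
  have h : Real.exp ξ = ∑' n : ℕ, ξ^n / (n.factorial : ℝ) := by
    rw [Real.exp_eq_exp_ℝ, NormedSpace.exp_eq_tsum_div]
  rw [Summable.tsum_eq_zero_add (Real.summable_pow_div_factorial ξ)] at h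
  simp only [pow_zero, Nat.factorial_zero, Nat.cast_one, div_one] at h
  linarith [h.le, h.ge]

lemma halfSum {ξ : ℝ} (hξ : 0 < ξ) :
    (∑' k : ℕ, ξ ^ (((k : ℝ) + 1) + 1 / 2) / Real.Gamma (((k : ℝ) + 1) + 3 / 2))
      = ff (Real.sqrt ξ) - 2 * Real.sqrt ξ / Real.sqrt π := by
  have hterm : ∀ k : ℕ, ξ ^ (((k : ℝ) + 1) + 1 / 2) / Real.Gamma (((k : ℝ) + 1) + 3 / 2)
      = (Real.sqrt ξ)^(2*(k+1)+1) / Real.Gamma (((k+1:ℕ):ℝ) + 3/2) := by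
    intro k
    congr 1
    · have hr : (Real.sqrt ξ)^(2*(k+1)+1) = ξ^(k+1) * Real.sqrt ξ := by
        rw [pow_succ, pow_mul, Real.sq_sqrt hξ.le]
      rw [hr, show ((k : ℝ) + 1) + 1/2 = ((k+1:ℕ):ℝ) + (1/2:ℝ) by push_cast; ring,
        Real.rpow_add hξ, Real.rpow_natCast, ← Real.sqrt_eq_rpow]
    · push_cast; ring_nf
  rw [tsum_congr hterm]
  have h : ff (Real.sqrt ξ) = (Real.sqrt ξ)^(2*0+1) / Real.Gamma (((0:ℕ):ℝ) + 3/2)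
      + ∑' k : ℕ, (Real.sqrt ξ)^(2*(k+1)+1) / Real.Gamma (((k+1:ℕ):ℝ) + 3/2) :=
    Summable.tsum_eq_zero_add (summable_ff (Real.sqrt ξ))
  have h0 : (Real.sqrt ξ)^(2*0+1) / Real.Gamma (((0:ℕ):ℝ) + 3/2)
      = 2 * Real.sqrt ξ / Real.sqrt π := by
    norm_num [gamma_32]
    rw [div_div_eq_mul_div]
    ring
  rw [h0] at h
  linarith [h.le, h.ge]

lemma vstar_eq {ξ : ℝ} (hξ : 0 < ξ) :
    Vstar ξ = 2*Real.sqrt ξ/Real.sqrt π - 1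
      + (2/Real.sqrt π) * (Real.exp ξ * gaussTail (Real.sqrt ξ)) := by
  have hffv : ff (Real.sqrt ξ) = Real.exp ξ *
      ((2/Real.sqrt π) * (Real.sqrt π / 2 - gaussTail (Real.sqrt ξ))) := by
    have h := ff_eq (Real.sqrt ξ)
    rw [Real.sq_sqrt hξ.le, intervalG (Real.sqrt_nonneg ξ)] at h
    have h2 : Real.exp ξ * (Real.exp (-ξ) * ff (Real.sqrt ξ))
        = Real.exp ξ * ((2/Real.sqrt π) * (Real.sqrt π / 2 - gaussTail (Real.sqrt ξ))) := by
      rw [h]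
    rwa [← mul_assoc, ← Real.exp_add, add_neg_cancel, Real.exp_zero, one_mul] at h2
  rw [Vstar, expSum, halfSum hξ, hffv]
  have hs : Real.sqrt π ≠ 0 := ne_of_gt sqrtpi_pos
  field_simp
  ring







lemma scaled_bounds {c : ℝ} (hc : 0 < c) {ε : ℝ} (hε : 0 < ε) :
    2*Real.sqrt c/Real.sqrt π - ε ≤ ε * Vstar (c/ε^2) ∧
      ε * Vstar (c/ε^2) ≤ 2*Real.sqrt c/Real.sqrt π - ε + (2/(Real.sqrt π * Real.sqrt c))*ε^2 := by
  have hξ : 0 < c/ε^2 := by positivity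
  have hsc : 0 < Real.sqrt c := Real.sqrt_pos.mpr hc
  have hsq : Real.sqrt (c/ε^2) = Real.sqrt c / ε := by
    rw [Real.sqrt_div hc.le, Real.sqrt_sq hε.le]
  have hE0 : 0 ≤ Real.exp (c/ε^2) * gaussTail (Real.sqrt c / ε) := by
    have := gaussTail_nonneg (Real.sqrt c / ε)
    positivity
  have hE1 : Real.exp (c/ε^2) * gaussTail (Real.sqrt c / ε) ≤ ε / Real.sqrt c := by
    have hpos : 0 < Real.sqrt c / ε := by positivity
    have h := gaussTail_le hpos
    have h2 : (Real.sqrt c / ε)^2 = c/ε^2 := by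
      rw [div_pow, Real.sq_sqrt hc.le]
    rw [h2] at h
    calc Real.exp (c/ε^2) * gaussTail (Real.sqrt c / ε)
        ≤ Real.exp (c/ε^2) * (Real.exp (-(c/ε^2)) / (Real.sqrt c / ε)) := by
          exact mul_le_mul_of_nonneg_left h (Real.exp_pos _).le
      _ = ε / Real.sqrt c := by
          rw [← mul_div_assoc, ← Real.exp_add, add_neg_cancel, Real.exp_zero, one_div_div]
  rw [vstar_eq hξ, hsq]
  have hne : ε ≠ 0 := ne_of_gt hε
  have key : ε * (2 * (Real.sqrt c / ε) / Real.sqrt π - 1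
      + 2 / Real.sqrt π * (Real.exp (c/ε^2) * gaussTail (Real.sqrt c / ε)))
      = 2*Real.sqrt c/Real.sqrt π - ε
        + (2/Real.sqrt π) * (ε * (Real.exp (c/ε^2) * gaussTail (Real.sqrt c / ε))) := by
    field_simp
  rw [key]
  constructor
  · have h5 : 0 ≤ (2/Real.sqrt π) * (ε * (Real.exp (c/ε^2) * gaussTail (Real.sqrt c / ε))) := by
      have := gaussTail_nonneg (Real.sqrt c / ε)
      positivity
    linarith
  · have h2 : ε * (Real.exp (c/ε^2) * gaussTail (Real.sqrt c / ε)) ≤ ε * (ε / Real.sqrt c) :=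
      mul_le_mul_of_nonneg_left hE1 hε.le
    have h3 : (2/Real.sqrt π) * (ε * (Real.exp (c/ε^2) * gaussTail (Real.sqrt c / ε)))
        ≤ (2/Real.sqrt π) * (ε * (ε / Real.sqrt c)) :=
      mul_le_mul_of_nonneg_left h2 (by positivity)
    have h4 : (2/Real.sqrt π) * (ε * (ε / Real.sqrt c)) = (2/(Real.sqrt π * Real.sqrt c))*ε^2 := by
      field_simp
    linarith [h3, h4.le, h4.ge]

lemma tendsto_scaled {c : ℝ} (hc : 0 < c) :
    Tendsto (fun ε : ℝ => ε * Vstar (c/ε^2)) (nhdsWithin 0 (Set.Ioi 0))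
      (nhds (2*Real.sqrt c/Real.sqrt π)) := by
  have hid : Tendsto (fun ε : ℝ => ε) (nhdsWithin 0 (Set.Ioi 0)) (nhds 0) :=
    tendsto_id.mono_left nhdsWithin_le_nhds
  have hlo : Tendsto (fun ε : ℝ => 2*Real.sqrt c/Real.sqrt π - ε)
      (nhdsWithin 0 (Set.Ioi 0)) (nhds (2*Real.sqrt c/Real.sqrt π)) := by
    have := tendsto_const_nhds (x := 2*Real.sqrt c/Real.sqrt π)
      (f := nhdsWithin (0:ℝ) (Set.Ioi 0)) |>.sub hid
    simpa using this
  have hhi : Tendsto (fun ε : ℝ => 2*Real.sqrt c/Real.sqrt π - ε + (2/(Real.sqrt π * Real.sqrt c))*ε^2)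
      (nhdsWithin 0 (Set.Ioi 0)) (nhds (2*Real.sqrt c/Real.sqrt π)) := by
    have h2 : Tendsto (fun ε : ℝ => (2/(Real.sqrt π * Real.sqrt c))*ε^2)
        (nhdsWithin 0 (Set.Ioi 0)) (nhds 0) := by
      have := ((hid.mul hid).const_mul (2/(Real.sqrt π * Real.sqrt c)))
      simpa [sq, mul_assoc] using this
    have := hlo.add h2
    simpa using this
  apply tendsto_of_tendsto_of_tendsto_of_le_of_le' hlo hhi
  · filter_upwards [self_mem_nhdsWithin] with ε hε
    exact (scaled_bounds hc hε).1
  · filter_upwards [self_mem_nhdsWithin] with ε hε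
    exact (scaled_bounds hc hε).2


/-- For fixed `x₀ ∈ (0,1)`, the exact solution
`u_ε(x₀) = x₀ − V*_{1/2}(x₀/ε²)/V*_{1/2}(1/ε²)` converges to `x₀ − √x₀`
as `ε → 0⁺`, which differs from the reduced solution value `x₀ − 1`. -/
theorem stmt_12 (x₀ : ℝ) (hx₀ : x₀ ∈ Set.Ioo (0 : ℝ) 1) :
    Filter.Tendsto (fun ε : ℝ => x₀ - Vstar (x₀ / ε ^ 2) / Vstar (1 / ε ^ 2))
        (nhdsWithin 0 (Set.Ioi 0)) (nhds (x₀ - Real.sqrt x₀)) ∧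
      x₀ - Real.sqrt x₀ ≠ x₀ - 1 := by
  obtain ⟨hx0, hx1⟩ := hx₀
  constructor
  · have hA := tendsto_scaled hx0
    have hB := tendsto_scaled one_pos
    have hBne : 2*Real.sqrt 1/Real.sqrt π ≠ 0 := by
      rw [Real.sqrt_one]
      positivity
    have hdiv := hA.div hB hBne
    have hval : (2*Real.sqrt x₀/Real.sqrt π) / (2*Real.sqrt 1/Real.sqrt π) = Real.sqrt x₀ := by
      rw [Real.sqrt_one]
      field_simp
    rw [hval] at hdiv
    have hfin := (tendsto_const_nhds (x := x₀)
      (f := nhdsWithin (0:ℝ) (Set.Ioi 0))).sub hdiv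
    apply hfin.congr'
    filter_upwards [self_mem_nhdsWithin] with ε hε
    have hne : ε ≠ 0 := ne_of_gt hε
    simp only [Pi.div_apply]
    rw [mul_div_mul_left _ _ hne]
  · intro h
    have h1 : Real.sqrt x₀ = 1 := by linarith
    have h2 : Real.sqrt x₀ < 1 := by
      rw [show (1:ℝ) = Real.sqrt 1 by simp]
      exact Real.sqrt_lt_sqrt hx0.le hx1
    linarith
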